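/- arXiv:2202.09822 — 2 statements merged into one kernel-verified Lean document; each statement's English description precedes it below -/
import Mathlib

section
/- Let G be a finite simple graph and v a vertex of G such that r₂(G - v) = r₂(G), and let S be a set of vertices of G not containing v such that N(v) is the symmetric difference of the open neighborhoods of the vertices in S (equivalently, a vertex w ≠ v is adjacent to v in G if and only if w has an odd number of neighbors in S). If there exists a minimum odd cover of G - v (one of cardinality b₂(G - v)) in which no biclique (X,Y) has both |X ∩ S| and |Y ∩ S| odd, then b₂(G) = b₂(G - v). -/
open scoped Classical

/-- A list of bicliques `B 0, …, B (k-1)` (each given by a pair of disjoint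
vertex subsets) is an *odd cover* of `G` if two distinct vertices are adjacent
in `G` exactly when they lie in opposite parts of an odd number of the bicliques. -/
def IsOddCover {V : Type*} [Fintype V] (G : SimpleGraph V) {k : ℕ}
    (B : Fin k → Finset V × Finset V) : Prop :=
  (∀ i, Disjoint (B i).1 (B i).2) ∧
  ∀ u v : V, u ≠ v →
    (G.Adj u v ↔ Odd (Finset.univ.filter (fun i : Fin k =>
      (u ∈ (B i).1 ∧ v ∈ (B i).2) ∨ (u ∈ (B i).2 ∧ v ∈ (B i).1))).card)

/-- `b2 G` is the minimum cardinality of an odd cover of `G`. -/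
noncomputable def b2 {V : Type*} [Fintype V] (G : SimpleGraph V) : ℕ :=
  sInf {k : ℕ | ∃ B : Fin k → Finset V × Finset V, IsOddCover G B}

/-- `r2 G` is the rank of the adjacency matrix of `G` over `𝔽₂`. -/
noncomputable def r2 {V : Type*} [Fintype V] (G : SimpleGraph V) : ℕ :=
  (Matrix.of fun u v : V => if G.Adj u v then (1 : ZMod 2) else 0).rank

open Finset

private noncomputable def ind2 (p : Prop) : ZMod 2 := if p then 1 else 0

private lemma ind2_pos {p : Prop} (h : p) : ind2 p = 1 := if_pos h

private lemma ind2_neg {p : Prop} (h : ¬p) : ind2 p = 0 := if_neg h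

private lemma ind2_congr {p q : Prop} (h : p ↔ q) : ind2 p = ind2 q :=
  if_congr h rfl rfl

private lemma odd_iff_cast' (n : ℕ) : Odd n ↔ (n : ZMod 2) = 1 := by
  rw [Nat.odd_iff, ← ZMod.natCast_mod n 2]
  rcases Nat.mod_two_eq_zero_or_one n with h | h <;> rw [h] <;> simp

private lemma cast_ind2 (n : ℕ) : ((n : ℕ) : ZMod 2) = ind2 (Odd n) := by
  by_cases h : Odd n
  · rw [ind2_pos h]
    exact (odd_iff_cast' n).mp h
  · rw [ind2_neg h]
    rw [Nat.odd_iff] at h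
    have h0 : n % 2 = 0 := by omega
    rw [← ZMod.natCast_mod n 2, h0]
    rfl

private lemma cast_card_filter2 {α : Type*} (s : Finset α) (p : α → Prop) [DecidablePred p] :
    (((s.filter p).card : ℕ) : ZMod 2) = ∑ a ∈ s, ind2 (p a) := by
  rw [Finset.card_filter, Nat.cast_sum]
  refine Finset.sum_congr rfl fun a _ => ?_
  by_cases h : p a
  · rw [if_pos h, ind2_pos h, Nat.cast_one]
  · rw [if_neg h, ind2_neg h, Nat.cast_zero]

private lemma odd_card_eq {α : Type*} {s t : Finset α} (h : s = t) :
    Odd s.card ↔ Odd t.card := by rw [h]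

private lemma odd_card_filter_congr {α : Type*} (s : Finset α) {p q : α → Prop}
    {ip : DecidablePred p} {iq : DecidablePred q} (h : ∀ x, p x ↔ q x) :
    (Odd (@Finset.filter α p ip s).card ↔ Odd (@Finset.filter α q iq s).card) := by
  have he : @Finset.filter α p ip s = @Finset.filter α q iq s := by
    apply Finset.ext
    intro a
    rw [@Finset.mem_filter α p ip, @Finset.mem_filter α q iq]
    exact and_congr_right fun _ => h a
  rw [he]

private lemma mem_image_iff {V : Type*} {v : V} (T : Finset {u : V | u ≠ v})
    (u : V) (hu : u ≠ v) :
    u ∈ T.image Subtype.val ↔ (⟨u, hu⟩ : {u : V | u ≠ v}) ∈ T := by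
  rw [Finset.mem_image]
  constructor
  · rintro ⟨x, hx, rfl⟩
    have hx' : (⟨(x : V), hu⟩ : {u : V | u ≠ v}) = x := Subtype.ext rfl
    rw [hx']
    exact hx
  · intro h
    exact ⟨_, h, rfl⟩

private lemma v_notMem_image {V : Type*} {v : V} (T : Finset {u : V | u ≠ v}) :
    v ∉ T.image Subtype.val := by
  intro h
  rw [Finset.mem_image] at h
  obtain ⟨x, -, hx⟩ := h
  exact x.2 hx

private lemma mem_aux {V : Type*} {v : V} (u : V) (hu : u ≠ v)
    (T : Finset {u : V | u ≠ v}) (c : Prop) [Decidable c] :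
    (u ∈ T.image Subtype.val ∪ (if c then {v} else ∅) ↔
      (⟨u, hu⟩ : {u : V | u ≠ v}) ∈ T) := by
  rw [Finset.mem_union, mem_image_iff T u hu]
  constructor
  · rintro (h | h)
    · exact h
    · exfalso
      split at h
      · exact hu (Finset.mem_singleton.mp h)
      · exact absurd h (Finset.notMem_empty u)
  · exact Or.inl

private lemma mem_aux_v {V : Type*} {v : V}
    (T : Finset {u : V | u ≠ v}) (c : Prop) [Decidable c] :
    (v ∈ T.image Subtype.val ∪ (if c then {v} else ∅) ↔ c) := by
  rw [Finset.mem_union]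
  constructor
  · rintro (h | h)
    · exact absurd h (v_notMem_image T)
    · split at h
      · assumption
      · exact absurd h (Finset.notMem_empty v)
  · intro hc
    right
    rw [if_pos hc]
    exact Finset.mem_singleton_self v

/-- Extension of an odd cover of `G - v` to one of `G`. -/
private noncomputable def extCover {V : Type*} (v : V) (S : Finset V) {k : ℕ}
    (B : Fin k → Finset {u : V | u ≠ v} × Finset {u : V | u ≠ v}) :
    Fin k → Finset V × Finset V := fun i =>
  ((B i).1.image Subtype.val ∪
      (if Odd (((B i).1.filter (fun x => ↑x ∈ S)).card) then {v} else ∅),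
   (B i).2.image Subtype.val ∪
      (if Odd (((B i).2.filter (fun x => ↑x ∈ S)).card) then {v} else ∅))

private lemma mem_extCover_fst {V : Type*} (v : V) (S : Finset V) {k : ℕ}
    (B : Fin k → Finset {u : V | u ≠ v} × Finset {u : V | u ≠ v}) (i : Fin k)
    (u : V) (hu : u ≠ v) :
    u ∈ (extCover v S B i).1 ↔ (⟨u, hu⟩ : {u : V | u ≠ v}) ∈ (B i).1 := by
  simp only [extCover]
  exact mem_aux u hu _ _

private lemma mem_extCover_snd {V : Type*} (v : V) (S : Finset V) {k : ℕ}
    (B : Fin k → Finset {u : V | u ≠ v} × Finset {u : V | u ≠ v}) (i : Fin k)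
    (u : V) (hu : u ≠ v) :
    u ∈ (extCover v S B i).2 ↔ (⟨u, hu⟩ : {u : V | u ≠ v}) ∈ (B i).2 := by
  simp only [extCover]
  exact mem_aux u hu _ _

private lemma v_mem_extCover_fst {V : Type*} (v : V) (S : Finset V) {k : ℕ}
    (B : Fin k → Finset {u : V | u ≠ v} × Finset {u : V | u ≠ v}) (i : Fin k) :
    v ∈ (extCover v S B i).1 ↔ Odd (((B i).1.filter (fun x => ↑x ∈ S)).card) := by
  simp only [extCover]
  exact mem_aux_v _ _

private lemma v_mem_extCover_snd {V : Type*} (v : V) (S : Finset V) {k : ℕ}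
    (B : Fin k → Finset {u : V | u ≠ v} × Finset {u : V | u ≠ v}) (i : Fin k) :
    v ∈ (extCover v S B i).2 ↔ Odd (((B i).2.filter (fun x => ↑x ∈ S)).card) := by
  simp only [extCover]
  exact mem_aux_v _ _

set_option maxHeartbeats 1600000 in
private lemma extCover_isOddCover {V : Type*} [Fintype V] (G : SimpleGraph V) (v : V)
    (S : Finset V) (hvS : v ∉ S)
    (hNv : ∀ w : V, w ≠ v → (G.Adj v w ↔ Odd (S.filter (fun s => G.Adj w s)).card))
    {k : ℕ} (B : Fin k → Finset {u : V | u ≠ v} × Finset {u : V | u ≠ v})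
    (hB : IsOddCover (G.induce {u : V | u ≠ v}) B)
    (hBS : ∀ i, ¬(Odd (((B i).1.filter (fun x => ↑x ∈ S)).card) ∧
        Odd (((B i).2.filter (fun x => ↑x ∈ S)).card))) :
    IsOddCover G (extCover v S B) := by
  constructor
  · intro i
    rw [Finset.disjoint_left]
    intro a ha hay
    by_cases hav : a = v
    · rw [hav] at ha hay
      exact hBS i ⟨(v_mem_extCover_fst v S B i).mp ha, (v_mem_extCover_snd v S B i).mp hay⟩
    · exact Finset.disjoint_left.mp (hB.1 i)
        ((mem_extCover_fst v S B i a hav).mp ha) ((mem_extCover_snd v S B i a hav).mp hay)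
  · -- adjacency
    have key : ∀ (u : V) (hu : u ≠ v),
        (G.Adj v u ↔ Odd (Finset.univ.filter (fun i : Fin k =>
          (v ∈ (extCover v S B i).1 ∧ u ∈ (extCover v S B i).2) ∨
          (v ∈ (extCover v S B i).2 ∧ u ∈ (extCover v S B i).1))).card) := by
      intro u hu
      rw [hNv u hu, odd_iff_cast', odd_iff_cast', cast_card_filter2, cast_card_filter2]
      suffices hsum : (∑ s ∈ S, ind2 (G.Adj u s)) =
          ∑ i : Fin k, ind2 ((v ∈ (extCover v S B i).1 ∧ u ∈ (extCover v S B i).2) ∨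
            (v ∈ (extCover v S B i).2 ∧ u ∈ (extCover v S B i).1)) by rw [hsum]
      have h1 : ∀ s ∈ S, ind2 (G.Adj u s) =
          ∑ i : Fin k, ind2
            (((⟨u, hu⟩ : {u : V | u ≠ v}) ∈ (B i).1 ∧ s ∈ (B i).2.image Subtype.val) ∨
             ((⟨u, hu⟩ : {u : V | u ≠ v}) ∈ (B i).2 ∧ s ∈ (B i).1.image Subtype.val)) := by
        intro s hs
        have hsv : s ≠ v := fun h => hvS (h ▸ hs)
        by_cases hsu : s = u
        · subst hsu
          rw [ind2_neg (G.irrefl)]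
          symm
          apply Finset.sum_eq_zero
          intro i _
          apply ind2_neg
          rintro (⟨hx, hy⟩ | ⟨hx, hy⟩)
          · exact Finset.disjoint_left.mp (hB.1 i) hx ((mem_image_iff _ s hsv).mp hy)
          · exact Finset.disjoint_left.mp (hB.1 i) ((mem_image_iff _ s hsv).mp hy) hx
        · have hne' : (⟨u, hu⟩ : {u : V | u ≠ v}) ≠ ⟨s, hsv⟩ :=
            fun h => hsu ((congrArg Subtype.val h).symm)
          have h2 := hB.2 ⟨u, hu⟩ ⟨s, hsv⟩ hne'
          have hadj : (G.induce {u : V | u ≠ v}).Adj ⟨u, hu⟩ ⟨s, hsv⟩ ↔ G.Adj u s := Iff.rfl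
          rw [hadj, odd_iff_cast', cast_card_filter2] at h2
          have hsum2 : (∑ i : Fin k, ind2
              (((⟨u, hu⟩ : {u : V | u ≠ v}) ∈ (B i).1 ∧ s ∈ (B i).2.image Subtype.val) ∨
               ((⟨u, hu⟩ : {u : V | u ≠ v}) ∈ (B i).2 ∧ s ∈ (B i).1.image Subtype.val))) =
              ∑ i : Fin k, ind2
              (((⟨u, hu⟩ : {u : V | u ≠ v}) ∈ (B i).1 ∧ (⟨s, hsv⟩ : {u : V | u ≠ v}) ∈ (B i).2) ∨
               ((⟨u, hu⟩ : {u : V | u ≠ v}) ∈ (B i).2 ∧ (⟨s, hsv⟩ : {u : V | u ≠ v}) ∈ (B i).1)) :=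
            Finset.sum_congr rfl fun i _ => ind2_congr
              (by rw [mem_image_iff ((B i).2) s hsv, mem_image_iff ((B i).1) s hsv])
          rw [hsum2]
          by_cases ha : G.Adj u s
          · rw [ind2_pos ha, h2.mp ha]
          · rw [ind2_neg ha]
            have hne1 := fun h => ha (h2.mpr h)
            rcases (show ∀ x : ZMod 2, x = 0 ∨ x = 1 by decide)
              (∑ i : Fin k, ind2
              (((⟨u, hu⟩ : {u : V | u ≠ v}) ∈ (B i).1 ∧ (⟨s, hsv⟩ : {u : V | u ≠ v}) ∈ (B i).2) ∨
               ((⟨u, hu⟩ : {u : V | u ≠ v}) ∈ (B i).2 ∧ (⟨s, hsv⟩ : {u : V | u ≠ v}) ∈ (B i).1)))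
              with h | h
            · exact h.symm
            · exact absurd h hne1
      calc (∑ s ∈ S, ind2 (G.Adj u s))
          = ∑ s ∈ S, ∑ i : Fin k, ind2
              (((⟨u, hu⟩ : {u : V | u ≠ v}) ∈ (B i).1 ∧ s ∈ (B i).2.image Subtype.val) ∨
               ((⟨u, hu⟩ : {u : V | u ≠ v}) ∈ (B i).2 ∧ s ∈ (B i).1.image Subtype.val)) :=
            Finset.sum_congr rfl h1
        _ = ∑ i : Fin k, ∑ s ∈ S, ind2
              (((⟨u, hu⟩ : {u : V | u ≠ v}) ∈ (B i).1 ∧ s ∈ (B i).2.image Subtype.val) ∨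
               ((⟨u, hu⟩ : {u : V | u ≠ v}) ∈ (B i).2 ∧ s ∈ (B i).1.image Subtype.val)) :=
            Finset.sum_comm
        _ = ∑ i : Fin k, ind2 ((v ∈ (extCover v S B i).1 ∧ u ∈ (extCover v S B i).2) ∨
              (v ∈ (extCover v S B i).2 ∧ u ∈ (extCover v S B i).1)) := by
            refine Finset.sum_congr rfl ?_
            intro i _
            have hP : ((v ∈ (extCover v S B i).1 ∧ u ∈ (extCover v S B i).2) ∨
                (v ∈ (extCover v S B i).2 ∧ u ∈ (extCover v S B i).1)) ↔
                ((Odd (((B i).1.filter (fun x => ↑x ∈ S)).card) ∧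
                    (⟨u, hu⟩ : {u : V | u ≠ v}) ∈ (B i).2) ∨
                 (Odd (((B i).2.filter (fun x => ↑x ∈ S)).card) ∧
                    (⟨u, hu⟩ : {u : V | u ≠ v}) ∈ (B i).1)) := by
              rw [v_mem_extCover_fst v S B i, v_mem_extCover_snd v S B i,
                mem_extCover_fst v S B i u hu, mem_extCover_snd v S B i u hu]
            by_cases h1' : (⟨u, hu⟩ : {u : V | u ≠ v}) ∈ (B i).1
            · have h2' : (⟨u, hu⟩ : {u : V | u ≠ v}) ∉ (B i).2 :=
                Finset.disjoint_left.mp (hB.1 i) h1'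
              have hcard : ((S.filter (fun s => s ∈ (B i).2.image Subtype.val)).card) =
                  (((B i).2.filter (fun x => ↑x ∈ S)).card) := by
                rw [Finset.filter_mem_eq_inter, Finset.inter_comm, ← Finset.filter_mem_eq_inter,
                  Finset.filter_image, Finset.card_image_of_injective _ Subtype.val_injective]
              calc (∑ s ∈ S, ind2
                  (((⟨u, hu⟩ : {u : V | u ≠ v}) ∈ (B i).1 ∧ s ∈ (B i).2.image Subtype.val) ∨
                   ((⟨u, hu⟩ : {u : V | u ≠ v}) ∈ (B i).2 ∧ s ∈ (B i).1.image Subtype.val)))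
                  = ∑ s ∈ S, ind2 (s ∈ (B i).2.image Subtype.val) :=
                    Finset.sum_congr rfl fun s _ => ind2_congr (by tauto)
                _ = (((S.filter (fun s => s ∈ (B i).2.image Subtype.val)).card : ℕ) : ZMod 2) :=
                    (cast_card_filter2 _ _).symm
                _ = (((((B i).2.filter (fun x => ↑x ∈ S)).card : ℕ)) : ZMod 2) := by rw [hcard]
                _ = ind2 (Odd ((((B i).2.filter (fun x => ↑x ∈ S)).card))) := cast_ind2 _
                _ = ind2 ((v ∈ (extCover v S B i).1 ∧ u ∈ (extCover v S B i).2) ∨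
                      (v ∈ (extCover v S B i).2 ∧ u ∈ (extCover v S B i).1)) :=
                    ind2_congr (by rw [hP]; tauto)
            · by_cases h2' : (⟨u, hu⟩ : {u : V | u ≠ v}) ∈ (B i).2
              · have hcard : ((S.filter (fun s => s ∈ (B i).1.image Subtype.val)).card) =
                    (((B i).1.filter (fun x => ↑x ∈ S)).card) := by
                  rw [Finset.filter_mem_eq_inter, Finset.inter_comm, ← Finset.filter_mem_eq_inter,
                    Finset.filter_image, Finset.card_image_of_injective _ Subtype.val_injective]
                calc (∑ s ∈ S, ind2
                    (((⟨u, hu⟩ : {u : V | u ≠ v}) ∈ (B i).1 ∧ s ∈ (B i).2.image Subtype.val) ∨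
                     ((⟨u, hu⟩ : {u : V | u ≠ v}) ∈ (B i).2 ∧ s ∈ (B i).1.image Subtype.val)))
                    = ∑ s ∈ S, ind2 (s ∈ (B i).1.image Subtype.val) :=
                      Finset.sum_congr rfl fun s _ => ind2_congr (by tauto)
                  _ = (((S.filter (fun s => s ∈ (B i).1.image Subtype.val)).card : ℕ) : ZMod 2) :=
                      (cast_card_filter2 _ _).symm
                  _ = (((((B i).1.filter (fun x => ↑x ∈ S)).card : ℕ)) : ZMod 2) := by rw [hcard]
                  _ = ind2 (Odd ((((B i).1.filter (fun x => ↑x ∈ S)).card))) := cast_ind2 _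
                  _ = ind2 ((v ∈ (extCover v S B i).1 ∧ u ∈ (extCover v S B i).2) ∨
                        (v ∈ (extCover v S B i).2 ∧ u ∈ (extCover v S B i).1)) :=
                      ind2_congr (by rw [hP]; tauto)
              · rw [ind2_neg (by rw [hP]; tauto)]
                apply Finset.sum_eq_zero
                intro s _
                exact ind2_neg (by tauto)
    intro u w huw
    by_cases hu : u = v
    · subst hu
      exact (key w (fun h => huw h.symm)).trans
        (odd_card_filter_congr Finset.univ fun i => Iff.rfl)
    · by_cases hw : w = v
      · subst hw
        refine (G.adj_comm u w).trans ((key u hu).trans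
          (odd_card_filter_congr Finset.univ fun i => ?_))
        tauto
      · have huw' : (⟨u, hu⟩ : {u : V | u ≠ v}) ≠ ⟨w, hw⟩ :=
          fun h => huw (congrArg Subtype.val h)
        have h2 := hB.2 ⟨u, hu⟩ ⟨w, hw⟩ huw'
        have hadj : (G.induce {u : V | u ≠ v}).Adj ⟨u, hu⟩ ⟨w, hw⟩ ↔ G.Adj u w := Iff.rfl
        rw [hadj] at h2
        refine h2.trans ((odd_card_filter_congr Finset.univ fun i => ?_).symm)
        rw [mem_extCover_fst v S B i u hu, mem_extCover_snd v S B i u hu,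
          mem_extCover_fst v S B i w hw, mem_extCover_snd v S B i w hw]

private noncomputable def resCover {V : Type*} (v : V) {k : ℕ}
    (C : Fin k → Finset V × Finset V) :
    Fin k → Finset {u : V | u ≠ v} × Finset {u : V | u ≠ v} := fun i =>
  ((C i).1.subtype (fun u => u ∈ {u : V | u ≠ v}),
   (C i).2.subtype (fun u => u ∈ {u : V | u ≠ v}))

private lemma resCover_isOddCover {V : Type*} [Fintype V] (G : SimpleGraph V) (v : V) {k : ℕ}
    (C : Fin k → Finset V × Finset V) (hC : IsOddCover G C) :
    IsOddCover (G.induce {u : V | u ≠ v}) (resCover v C) := by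
  constructor
  · intro i
    rw [Finset.disjoint_left]
    intro a ha hb
    simp only [resCover, Finset.mem_subtype] at ha hb
    exact Finset.disjoint_left.mp (hC.1 i) ha hb
  · intro a b hab
    have hab' : (a : V) ≠ (b : V) := fun h => hab (Subtype.ext h)
    have h2 := hC.2 a b hab'
    have hadj : (G.induce {u : V | u ≠ v}).Adj a b ↔ G.Adj a b := Iff.rfl
    refine hadj.trans (h2.trans
      ((odd_card_filter_congr Finset.univ fun i => ?_).symm))
    simp only [resCover, Finset.mem_subtype]

theorem stmt8 {V : Type*} [Fintype V] (G : SimpleGraph V) (v : V)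
    (S : Finset V) (hvS : v ∉ S)
    (hrank : r2 (G.induce {u : V | u ≠ v}) = r2 G)
    (hNv : ∀ w : V, w ≠ v → (G.Adj v w ↔ Odd (S.filter (fun s => G.Adj w s)).card))
    (hmin : ∃ B : Fin (b2 (G.induce {u : V | u ≠ v})) →
        Finset {u : V | u ≠ v} × Finset {u : V | u ≠ v},
      IsOddCover (G.induce {u : V | u ≠ v}) B ∧
      ∀ i, ¬(Odd ((B i).1.filter (fun x => ↑x ∈ S)).card ∧
             Odd ((B i).2.filter (fun x => ↑x ∈ S)).card)) :
    b2 G = b2 (G.induce {u : V | u ≠ v}) := by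
  obtain ⟨B, hB, hBS⟩ := hmin
  have hext : IsOddCover G (extCover v S B) :=
    extCover_isOddCover G v S hvS hNv B hB hBS
  have h1 : b2 G ≤ b2 (G.induce {u : V | u ≠ v}) :=
    Nat.sInf_le ⟨extCover v S B, hext⟩
  have hne : {k : ℕ | ∃ C : Fin k → Finset V × Finset V, IsOddCover G C}.Nonempty :=
    ⟨_, extCover v S B, hext⟩
  obtain ⟨C, hC⟩ := Nat.sInf_mem hne
  have h2 : b2 (G.induce {u : V | u ≠ v}) ≤ b2 G :=
    Nat.sInf_le ⟨resCover v C, resCover_isOddCover G v C hC⟩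
  exact le_antisymm h1 h2
end

section
/- For every even integer n ≥ 4, the minimum cardinality of an odd cover of the cycle C_n on n vertices is (n - 2)/2; that is, b₂(C_n) = (n-2)/2. -/
open scoped Classical

/-- The cycle graph on `n` vertices `0,1,…,n-1`, with `i` adjacent to `j`
iff `i - j ≡ ±1 (mod n)`. -/
def cycleGraph (n : ℕ) : SimpleGraph (Fin n) :=
  SimpleGraph.fromRel (fun i j => (i.val + 1) % n = j.val)

/-!
Over `𝔽₂`, an odd cover of `G` by `k` bicliques `(Xᵢ, Yᵢ)` is the same thing as a decomposition
of the adjacency matrix as `∑ᵢ (xᵢ yᵢᵀ + yᵢ xᵢᵀ)` with `xᵢ, yᵢ` the indicator vectors of `Xᵢ, Yᵢ`;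
such a sum has rank at most `2k`, so `r₂(G) ≤ 2 b₂(G)`.

For `C_n`, a vector `w` in the kernel of the adjacency matrix satisfies `w (i - 1) + w (i + 1) = 0`,
i.e. `w (i + 2) = w i`, so it is determined by `w 0` and `w 1`: the kernel has dimension at most 2
and `r₂(C_n) ≥ n - 2`.

Conversely, for `n = 2m + 4` the four-cycles `0, 2j+1, 2j+2, 2j+3` (`j ≤ m`) are the bicliques
`({0, 2j+2}, {2j+1, 2j+3})`, and their sum mod 2 is `C_n`: each edge `{a, a+1}` with
`1 ≤ a ≤ n-2` occurs once, and each `{0, 2j+3}` with `j < m` occurs in two consecutive four-cycles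
and cancels, leaving `{0, 1}` and `{0, n-1}`.
-/

open Matrix Finset

theorem Finset.sum_range_two_mul {M : Type*} [AddCommMonoid M] (f : ℕ → M) (m : ℕ) :
    ∑ a ∈ range (2 * m), f a = ∑ j ∈ range m, (f (2 * j) + f (2 * j + 1)) := by
  induction m with
  | zero => simp
  | succ m ih => rw [Nat.mul_succ, sum_range_succ, sum_range_succ, sum_range_succ, ih, add_assoc]

theorem CharTwo.sum_range_add_succ {R : Type*} [Ring R] [CharP R 2] (f : ℕ → R) (m : ℕ) :
    ∑ j ∈ range m, (f j + f (j + 1)) = f 0 + f m := by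
  simpa [CharTwo.sub_eq_add, add_comm] using sum_range_sub f m

theorem ZMod.ite_eq_natCast_iff_odd (p : Prop) [Decidable p] (c : ℕ) :
    (if p then 1 else 0 : ZMod 2) = c ↔ (p ↔ Odd c) := by
  by_cases hp : p
  · simp [hp, eq_comm, ZMod.natCast_eq_one_iff_odd]
  · simp [hp, eq_comm, ZMod.natCast_eq_zero_iff_even]

open Fin.NatCast in
theorem Fin.natCast_ne_natCast {N : ℕ} [NeZero N] {a b : ℕ} (ha : a < N) (hb : b < N)
    (hab : a ≠ b) : (a : Fin N) ≠ b := by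
  rwa [Ne, Fin.ext_iff, Fin.val_cast_of_lt ha, Fin.val_cast_of_lt hb]

theorem Matrix.rank_sum_vecMulVec_le {m ι K : Type*} [Fintype m] [Fintype ι] [Field K]
    (x y : ι → m → K) : (∑ i, vecMulVec (x i) (y i)).rank ≤ Fintype.card ι := by
  have : ∑ i, vecMulVec (x i) (y i) = of (fun u i => x i u) * of (fun i v => y i v) := by
    ext u v
    simp [Matrix.sum_apply, vecMulVec_apply, Matrix.mul_apply]
  rw [this]
  exact (rank_mul_le_left _ _).trans (rank_le_card_width _)

section OddCover

variable {V : Type*}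

noncomputable def bicliqueMatrix (X Y : Finset V) : Matrix V V (ZMod 2) :=
  vecMulVec ((X : Set V).indicator 1) ((Y : Set V).indicator 1) +
    vecMulVec ((Y : Set V).indicator 1) ((X : Set V).indicator 1)

theorem bicliqueMatrix_comm (X Y : Finset V) : bicliqueMatrix X Y = bicliqueMatrix Y X :=
  add_comm _ _

theorem bicliqueMatrix_union_left [DecidableEq V] {X X' : Finset V} (h : Disjoint X X')
    (Y : Finset V) : bicliqueMatrix (X ∪ X') Y = bicliqueMatrix X Y + bicliqueMatrix X' Y := by
  have hind : ((X ∪ X' : Finset V) : Set V).indicator (1 : V → ZMod 2) =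
      (X : Set V).indicator 1 + (X' : Set V).indicator 1 := by
    rw [coe_union, Set.indicator_union_of_disjoint (disjoint_coe.2 h)]
    rfl
  simp only [bicliqueMatrix, hind, add_vecMulVec, vecMulVec_add]
  abel

theorem bicliqueMatrix_union_right [DecidableEq V] (X : Finset V) {Y Y' : Finset V}
    (h : Disjoint Y Y') :
    bicliqueMatrix X (Y ∪ Y') = bicliqueMatrix X Y + bicliqueMatrix X Y' := by
  simp only [bicliqueMatrix_comm X, bicliqueMatrix_union_left h]

theorem bicliqueMatrix_pair_pair [DecidableEq V] {a c b d : V} (hac : a ≠ c) (hbd : b ≠ d) :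
    bicliqueMatrix {a, c} {b, d} = bicliqueMatrix {a} {b} + bicliqueMatrix {a} {d} +
      (bicliqueMatrix {c} {b} + bicliqueMatrix {c} {d}) := by
  rw [insert_eq, insert_eq, bicliqueMatrix_union_left (disjoint_singleton.2 hac),
    bicliqueMatrix_union_right _ (disjoint_singleton.2 hbd),
    bicliqueMatrix_union_right _ (disjoint_singleton.2 hbd)]

theorem bicliqueMatrix_apply {X Y : Finset V} (h : Disjoint X Y) (u v : V) :
    bicliqueMatrix X Y u v = if (u ∈ X ∧ v ∈ Y) ∨ (u ∈ Y ∧ v ∈ X) then 1 else 0 := by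
  have hu : u ∈ X → u ∉ Y := fun hX => disjoint_left.1 h hX
  have hv : v ∈ X → v ∉ Y := fun hX => disjoint_left.1 h hX
  by_cases u ∈ X <;> by_cases u ∈ Y <;> by_cases v ∈ X <;> by_cases v ∈ Y <;>
    simp_all [bicliqueMatrix, vecMulVec_apply]

theorem rank_sum_bicliqueMatrix_le [Fintype V] {k : ℕ} (X Y : Fin k → Finset V) :
    (∑ i, bicliqueMatrix (X i) (Y i)).rank ≤ 2 * k := by
  let x : Fin k ⊕ Fin k → V → ZMod 2 :=
    Sum.elim (fun i => (X i : Set V).indicator 1) (fun i => (Y i : Set V).indicator 1)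
  let y : Fin k ⊕ Fin k → V → ZMod 2 :=
    Sum.elim (fun i => (Y i : Set V).indicator 1) (fun i => (X i : Set V).indicator 1)
  have : ∑ i, bicliqueMatrix (X i) (Y i) = ∑ j, vecMulVec (x j) (y j) := by
    simp [bicliqueMatrix, Fintype.sum_sum_type, sum_add_distrib, x, y]
  rw [this]
  simpa [two_mul] using Matrix.rank_sum_vecMulVec_le x y

variable [Fintype V] (G : SimpleGraph V)

theorem isOddCover_iff_adjMatrix_eq_sum [DecidableRel G.Adj] {k : ℕ}
    (B : Fin k → Finset V × Finset V) :
    IsOddCover G B ↔ (∀ i, Disjoint (B i).1 (B i).2) ∧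
      G.adjMatrix (ZMod 2) = ∑ i, bicliqueMatrix (B i).1 (B i).2 := by
  refine and_congr_right fun hB => ?_
  simp only [← Matrix.ext_iff, SimpleGraph.adjMatrix_apply, Matrix.sum_apply,
    bicliqueMatrix_apply (hB _), sum_boole, ZMod.ite_eq_natCast_iff_odd]
  refine ⟨fun h u v => ?_, fun h u v _ => h u v⟩
  rcases eq_or_ne u v with rfl | huv
  · have hempty (i : Fin k) : ¬((u ∈ (B i).1 ∧ u ∈ (B i).2) ∨ (u ∈ (B i).2 ∧ u ∈ (B i).1)) :=
      fun h => h.elim (fun h => disjoint_left.1 (hB i) h.1 h.2)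
        (fun h => disjoint_left.1 (hB i) h.2 h.1)
    simp [hempty]
  · exact h u v huv

theorem r2_eq_rank_adjMatrix [DecidableRel G.Adj] : r2 G = (G.adjMatrix (ZMod 2)).rank := by
  unfold r2 SimpleGraph.adjMatrix
  congr!

theorem r2_le_two_mul_of_isOddCover {k : ℕ} {B : Fin k → Finset V × Finset V}
    (h : IsOddCover G B) : r2 G ≤ 2 * k := by
  rw [r2_eq_rank_adjMatrix, ((isOddCover_iff_adjMatrix_eq_sum G B).1 h).2]
  exact rank_sum_bicliqueMatrix_le _ _

theorem r2_le_two_mul_b2 (h : ∃ k, ∃ B : Fin k → Finset V × Finset V, IsOddCover G B) :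
    r2 G ≤ 2 * b2 G := by
  obtain ⟨B, hB⟩ := Nat.sInf_mem h
  exact r2_le_two_mul_of_isOddCover G hB

theorem b2_le_of_isOddCover {k : ℕ} {B : Fin k → Finset V × Finset V} (h : IsOddCover G B) :
    b2 G ≤ k :=
  Nat.sInf_le ⟨B, h⟩

end OddCover

theorem cycleGraph_eq_simpleGraph_cycleGraph (n : ℕ) :
    cycleGraph n = SimpleGraph.cycleGraph n := by
  ext u v
  match n with
  | 0 => exact u.elim0
  | 1 => simp [Subsingleton.elim u v]
  | n + 2 =>
    have hsucc (a b : Fin (n + 2)) : (a.val + 1) % (n + 2) = b.val ↔ b - a = 1 := by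
      rw [sub_eq_iff_eq_add', Fin.ext_iff, Fin.val_add, Fin.val_one, eq_comm]
    simp only [cycleGraph, SimpleGraph.fromRel_adj, hsucc, SimpleGraph.cycleGraph_adj]
    refine ⟨fun h => h.2.symm, fun h => ⟨?_, h.symm⟩⟩
    rintro rfl
    simp at h

namespace SimpleGraph

open Fin.NatCast

theorem cycleGraph_adjMatrix_mulVec_apply {R : Type*} [NonAssocSemiring R] {n : ℕ}
    (w : Fin (n + 3) → R) (v : Fin (n + 3)) :
    ((cycleGraph (n + 3)).adjMatrix R *ᵥ w) v = w (v - 1) + w (v + 1) := by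
  rw [adjMatrix_mulVec_apply, cycleGraph_neighborFinset, sum_pair]
  rw [Ne, sub_eq_iff_eq_add, add_assoc, left_eq_add, one_add_one_eq_two, Fin.ext_iff,
    Fin.val_two]
  simp

theorem eq_zero_of_cycleGraph_adjMatrix_mulVec_eq_zero {n : ℕ} {w : Fin (n + 3) → ZMod 2}
    (hw : (cycleGraph (n + 3)).adjMatrix (ZMod 2) *ᵥ w = 0) (h0 : w 0 = 0) (h1 : w 1 = 0) :
    w = 0 := by
  have hstep (v : Fin (n + 3)) : w (v + 2) = w v := by
    have := congrFun hw (v + 1)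
    rw [cycleGraph_adjMatrix_mulVec_apply, Pi.zero_apply, CharTwo.add_eq_zero] at this
    rwa [add_sub_cancel_right, add_assoc, one_add_one_eq_two, eq_comm] at this
  have hcast : ∀ a : ℕ, w (a : Fin (n + 3)) = 0 := by
    refine Nat.twoStepInduction (by simpa using h0) (by simpa using h1) fun a ha _ => ?_
    rw [Nat.cast_add, Nat.cast_two, hstep, ha]
  funext v
  simpa using hcast v.val

theorem finrank_ker_cycleGraph_adjMatrix_le (n : ℕ) :
    Module.finrank (ZMod 2)
      (LinearMap.ker ((cycleGraph (n + 3)).adjMatrix (ZMod 2)).mulVecLin) ≤ 2 := by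
  let φ := ((LinearMap.proj 0).prod (LinearMap.proj 1)).comp
    (LinearMap.ker ((cycleGraph (n + 3)).adjMatrix (ZMod 2)).mulVecLin).subtype
  have hφ : Function.Injective φ := by
    rw [← LinearMap.ker_eq_bot, LinearMap.ker_eq_bot']
    rintro ⟨w, hw⟩ h
    obtain ⟨h0, h1⟩ := Prod.ext_iff.1 h
    exact Subtype.ext (eq_zero_of_cycleGraph_adjMatrix_mulVec_eq_zero hw h0 h1)
  simpa using LinearMap.finrank_le_finrank_of_injective hφ

theorem le_rank_cycleGraph_adjMatrix (n : ℕ) :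
    n + 1 ≤ ((cycleGraph (n + 3)).adjMatrix (ZMod 2)).rank := by
  have hsum := LinearMap.finrank_range_add_finrank_ker
    ((cycleGraph (n + 3)).adjMatrix (ZMod 2)).mulVecLin
  rw [Module.finrank_fin_fun] at hsum
  have hker := finrank_ker_cycleGraph_adjMatrix_le n
  rw [Matrix.rank]
  omega

theorem cycleGraph_adjMatrix_eq_sum_bicliqueMatrix (n : ℕ) :
    (cycleGraph (n + 3)).adjMatrix (ZMod 2) =
      ∑ a ∈ range (n + 3), bicliqueMatrix {(a : Fin (n + 3))} {((a + 1 : ℕ) : Fin (n + 3))} := by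
  rw [← Fin.sum_univ_eq_sum_range
    (fun a => bicliqueMatrix {(a : Fin (n + 3))} {((a + 1 : ℕ) : Fin (n + 3))})]
  simp only [Nat.cast_succ, Fin.cast_val_eq_self]
  ext u v
  have hcol := cycleGraph_adjMatrix_mulVec_apply (Pi.single v (1 : ZMod 2)) u
  rw [Matrix.mulVec_single_one, col_apply] at hcol
  rw [hcol]
  simp only [Matrix.sum_apply, bicliqueMatrix, Matrix.add_apply, vecMulVec_apply,
    Pi.single_apply, coe_singleton, Set.indicator_apply, Set.mem_singleton_iff, Pi.one_apply,
    ite_zero_mul_ite_zero, mul_one, sum_add_distrib]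
  rw [Fintype.sum_eq_single u fun x hx => if_neg fun h => hx h.1.symm,
    Fintype.sum_eq_single v fun x hx => if_neg fun h => hx h.2.symm, add_comm]
  simp [sub_eq_iff_eq_add, eq_comm (a := u + 1)]

def cycleBiclique (m j : ℕ) : Finset (Fin (2 * m + 4)) × Finset (Fin (2 * m + 4)) :=
  ({((0 : ℕ) : Fin _), ((2 * j + 2 : ℕ) : Fin _)},
    {((2 * j + 1 : ℕ) : Fin _), ((2 * j + 3 : ℕ) : Fin _)})

theorem disjoint_cycleBiclique {m j : ℕ} (hj : j < m + 1) :
    Disjoint (cycleBiclique m j).1 (cycleBiclique m j).2 := by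
  simp only [cycleBiclique, disjoint_insert_left, disjoint_insert_right, disjoint_singleton,
    mem_insert, mem_singleton, not_or]
  refine ⟨⟨?_, ?_⟩, ?_, ?_⟩ <;> apply Fin.natCast_ne_natCast <;> omega

theorem sum_bicliqueMatrix_cycleBiclique (m : ℕ) :
    ∑ j ∈ range (m + 1), bicliqueMatrix (cycleBiclique m j).1 (cycleBiclique m j).2 =
      (cycleGraph (2 * m + 4)).adjMatrix (ZMod 2) := by
  let F (a : ℕ) := bicliqueMatrix {(a : Fin (2 * m + 4))} {((a + 1 : ℕ) : Fin (2 * m + 4))}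
  let e (j : ℕ) :=
    bicliqueMatrix {((0 : ℕ) : Fin (2 * m + 4))} {((2 * j + 1 : ℕ) : Fin (2 * m + 4))}
  have hterm (j : ℕ) (hj : j < m + 1) :
      bicliqueMatrix (cycleBiclique m j).1 (cycleBiclique m j).2 =
        e j + e (j + 1) + (F (2 * j + 1) + F (2 * j + 2)) := by
    rw [cycleBiclique, bicliqueMatrix_pair_pair
      (Fin.natCast_ne_natCast (by omega) (by omega) (by omega))
      (Fin.natCast_ne_natCast (by omega) (by omega) (by omega)),
      bicliqueMatrix_comm {((2 * j + 2 : ℕ) : Fin (2 * m + 4))}]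
    rfl
  have hadj : (cycleGraph (2 * m + 4)).adjMatrix (ZMod 2) =
      ∑ a ∈ range (2 * m + 2), F (a + 1) + F 0 + F (2 * m + 3) := by
    rw [cycleGraph_adjMatrix_eq_sum_bicliqueMatrix (2 * m + 1), sum_range_succ, sum_range_succ']
  have hpairs : ∑ j ∈ range (m + 1), (F (2 * j + 1) + F (2 * j + 2)) =
      ∑ a ∈ range (2 * m + 2), F (a + 1) :=
    (sum_range_two_mul (fun a => F (a + 1)) (m + 1)).symm
  have hfirst : e 0 = F 0 := rfl
  have hlast : e (m + 1) = F (2 * m + 3) := by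
    have hwrap : ((2 * m + 3 + 1 : ℕ) : Fin (2 * m + 4)) = ((0 : ℕ) : Fin (2 * m + 4)) :=
      (Fin.natCast_self _).trans Nat.cast_zero.symm
    simp only [e, F, hwrap, bicliqueMatrix_comm {((0 : ℕ) : Fin (2 * m + 4))}]
    rfl
  rw [sum_congr rfl fun j hj => hterm j (mem_range.1 hj), sum_add_distrib,
    CharTwo.sum_range_add_succ, hpairs, hadj, hfirst, hlast]
  abel

theorem isOddCover_cycleBiclique (m : ℕ) :
    IsOddCover (cycleGraph (2 * m + 4)) fun j : Fin (m + 1) => cycleBiclique m j := by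
  rw [isOddCover_iff_adjMatrix_eq_sum]
  refine ⟨fun j => disjoint_cycleBiclique j.isLt, ?_⟩
  rw [Fin.sum_univ_eq_sum_range
      (fun j => bicliqueMatrix (cycleBiclique m j).1 (cycleBiclique m j).2),
    sum_bicliqueMatrix_cycleBiclique]

end SimpleGraph

theorem stmt10 (n : ℕ) (hn : 4 ≤ n) (heven : Even n) :
    b2 (cycleGraph n) = (n - 2) / 2 := by
  obtain ⟨m, rfl⟩ : ∃ m, n = 2 * m + 4 := by
    obtain ⟨k, rfl⟩ := heven
    exact ⟨k - 2, by omega⟩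
  have hcover := SimpleGraph.isOddCover_cycleBiclique m
  have hrank : 2 * m + 2 ≤ r2 (SimpleGraph.cycleGraph (2 * m + 4)) := by
    rw [r2_eq_rank_adjMatrix]
    exact SimpleGraph.le_rank_cycleGraph_adjMatrix (2 * m + 1)
  have hlow := r2_le_two_mul_b2 _ ⟨_, _, hcover⟩
  have hup := b2_le_of_isOddCover _ hcover
  rw [cycleGraph_eq_simpleGraph_cycleGraph]
  omega
end
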